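/- Let G be a finite sober connected simple graph. Then c-rk(G) = 3 if and only if G has at least 2 edges and contains no 4-cycle. -/

import Mathlib

/-- `St(W)`: the set of vertices adjacent to every vertex of `W` (so `St(∅) = V`). -/
def starW {V : Type*} (G : SimpleGraph V) (W : Set V) : Set V := {v | ∀ w ∈ W, G.Adj v w}

/-- The flats of `G`: all sets of the form `St(W)`, `W ⊆ V`. -/
def flats {V : Type*} (G : SimpleGraph V) : Set (Set V) := {X | ∃ W : Set V, X = starW G W}

/-- Height of a family of sets: the largest `k` admitting a strictly decreasing chain
`X₀ ⊃ X₁ ⊃ … ⊃ X_k` inside the family. -/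
noncomputable def heightOf {V : Type*} (F : Set (Set V)) : ℕ :=
  sSup {k | ∃ c : Fin (k + 1) → Set V, StrictAnti c ∧ ∀ i, c i ∈ F}

/-- The c-rank of a graph: the height of its lattice of flats. -/
noncomputable def crk {V : Type*} (G : SimpleGraph V) : ℕ := heightOf (flats G)

/-- `J` has a witness in `A_G^c`: there is an equal-size row set such that the corresponding
submatrix of the complemented adjacency matrix can be put in lower unitriangular form
(1's on the diagonal, 0's above) by independently permuting rows and columns. -/
def hasWitness {V : Type*} (G : SimpleGraph V) (J : Finset V) : Prop :=
  ∃ i : Fin J.card → V, ∃ j : Fin J.card → V,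
    Function.Injective i ∧ Function.Injective j ∧ (∀ r, j r ∈ J) ∧
    (∀ r, ¬ G.Adj (i r) (j r)) ∧ (∀ r s, r < s → G.Adj (i r) (j s))

/-- The c-rank of `G` defined via witnesses: maximum size of a vertex subset with a witness. -/
noncomputable def crkW {V : Type*} (G : SimpleGraph V) : ℕ :=
  sSup {k | ∃ J : Finset V, J.card = k ∧ hasWitness G J}

/-- A graph is sober if the star map `v ↦ St(v)` is injective. -/
def Sober {V : Type*} (G : SimpleGraph V) : Prop :=
  Function.Injective fun v => G.neighborSet v

open Finset

/-! A strict chain `X₀ ⊃ ⋯ ⊃ X_k` of flats yields vertices `x_r ∈ X_r \ X_{r+1}` and, writing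
`X_{r+1} = St(W)`, a vertex `y_r ∈ W` with `x_r ≁ y_r` while `X_{r+1} ⊆ St(y_r)`; so `x_r ~ y_s`
for all `s < r`. Conversely such a "staircase" gives the chain `X_r = St{y_s : s < r}`. Hence
`c-rk G ≥ k` iff `G` has a staircase of size `k`.

A staircase of size 3 contains a vertex with two distinct neighbours; conversely, if `b ~ a, c`
with `a ≠ c`, soberness gives `x` adjacent to exactly one of `a, c`, and `(a, x, b)` against
`(a, c, b)` is a staircase. In a connected graph a vertex with two distinct neighbours exists iff
there are two edges. A staircase of size 4 contains the 4-cycle `y₀ x₂ y₁ x₃`; conversely,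
separating the opposite vertices of a 4-cycle by soberness extends it to a staircase of size 4. -/

theorem le_heightOf_iff {V : Type*} [Finite V] {F : Set (Set V)} (hF : F.Nonempty) {k : ℕ} :
    k ≤ heightOf F ↔ ∃ c : Fin (k + 1) → Set V, StrictAnti c ∧ ∀ i, c i ∈ F := by
  set S := {k | ∃ c : Fin (k + 1) → Set V, StrictAnti c ∧ ∀ i, c i ∈ F}
  have restrict : ∀ {m k}, m ≤ k → k ∈ S → m ∈ S := fun hmk ⟨c, hc, hF⟩ =>
    ⟨c ∘ Fin.castLE (by omega), hc.comp_strictMono (Fin.strictMono_castLE _), fun _ => hF _⟩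
  have hne : S.Nonempty := by
    obtain ⟨X, hX⟩ := hF
    exact ⟨0, fun _ => X, fun a b h => (h.ne (Subsingleton.elim (α := Fin 1) a b)).elim,
      fun _ => hX⟩
  have hbdd : BddAbove S := by
    refine ⟨Nat.card (Set V), ?_⟩
    rintro k ⟨c, hc, -⟩
    have := Nat.card_le_card_of_injective c hc.injective
    rw [Nat.card_eq_fintype_card, Fintype.card_fin] at this
    omega
  exact ⟨fun hk => restrict hk (Nat.sSup_mem hne hbdd), fun hk => le_csSup hbdd hk⟩

section Staircase

variable {V : Type*} (G : SimpleGraph V)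

def HasStaircase (k : ℕ) : Prop :=
  ∃ x y : Fin k → V, (∀ r, ¬ G.Adj (x r) (y r)) ∧ ∀ s r, s < r → G.Adj (x r) (y s)

theorem starW_anti {W W' : Set V} (h : W ⊆ W') : starW G W' ⊆ starW G W :=
  fun _ hv w hw => hv w (h hw)

theorem flats_nonempty : (flats G).Nonempty := ⟨_, ∅, rfl⟩

theorem hasStaircase_of_strictAnti {k : ℕ} {c : Fin (k + 1) → Set V} (hc : StrictAnti c)
    (hflat : ∀ i, c i ∈ flats G) : HasStaircase G k := by
  have step : ∀ r : Fin k, ∃ x y, ¬ G.Adj x y ∧ x ∈ c r.castSucc ∧ c r.succ ⊆ {z | G.Adj z y} := by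
    intro r
    obtain ⟨x, hx, hxn⟩ := Set.exists_of_ssubset (hc (Fin.castSucc_lt_succ (i := r)))
    obtain ⟨W, hW⟩ := hflat r.succ
    rw [hW] at hxn ⊢
    obtain ⟨y, hyW, hxy⟩ : ∃ y ∈ W, ¬ G.Adj x y := by simpa [starW] using hxn
    exact ⟨x, y, hxy, hx, fun z hz => hz y hyW⟩
  choose x y hxy hx hsub using step
  exact ⟨x, y, hxy, fun s r hsr => hsub s (hc.antitone (Fin.succ_le_castSucc_iff.2 hsr) (hx r))⟩

theorem HasStaircase.exists_strictAnti {k : ℕ} (h : HasStaircase G k) :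
    ∃ c : Fin (k + 1) → Set V, StrictAnti c ∧ ∀ i, c i ∈ flats G := by
  obtain ⟨x, y, hxy, hadj⟩ := h
  refine ⟨fun r => starW G (y '' {s | s.castSucc < r}), fun r₁ r₂ hr => ?_, fun _ => ⟨_, rfl⟩⟩
  have hsub : starW G (y '' {s | s.castSucc < r₂}) ⊆ starW G (y '' {s | s.castSucc < r₁}) :=
    starW_anti G (Set.image_mono fun _ hs => lt_trans hs hr)
  refine (Set.ssubset_iff_of_subset hsub).2
    ⟨x (r₁.castPred (Fin.ne_last_of_lt hr)), ?_, fun hmem => ?_⟩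
  · rintro _ ⟨s, hs, rfl⟩
    exact hadj _ _ ((Fin.lt_castPred_iff _).2 hs)
  · exact hxy _ (hmem _ ⟨_, by simpa only [Set.mem_ofPred_eq, Fin.castSucc_castPred] using hr, rfl⟩)

theorem le_crk_iff [Finite V] {k : ℕ} : k ≤ crk G ↔ HasStaircase G k := by
  rw [crk, le_heightOf_iff (flats_nonempty G)]
  exact ⟨fun ⟨c, hc, hflat⟩ => hasStaircase_of_strictAnti G hc hflat,
    HasStaircase.exists_strictAnti G⟩

end Staircase

section Patterns

variable {V : Type*} {G : SimpleGraph V}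

theorem Sober.exists_adj_xor (hG : Sober G) {a c : V} (hac : a ≠ c) :
    ∃ x, Xor (G.Adj a x) (G.Adj c x) := by
  obtain ⟨x, hx⟩ := not_forall.1 (mt Set.ext (hG.ne hac))
  exact ⟨x, (xor_iff_not_iff _ _).2 hx⟩

theorem hasStaircase_three_of_adj {a b c x : V} (hba : G.Adj b a) (hbc : G.Adj b c)
    (hxa : G.Adj x a) (hxc : ¬ G.Adj x c) : HasStaircase G 3 := by
  refine ⟨![a, x, b], ![a, c, b], fun r => ?_, fun s r hsr => ?_⟩
  · fin_cases r <;> simp [hxc]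
  · fin_cases s <;> fin_cases r <;> simp_all [Fin.lt_def]

theorem hasStaircase_three_iff (hG : Sober G) :
    HasStaircase G 3 ↔ ∃ b a c, a ≠ c ∧ G.Adj b a ∧ G.Adj b c := by
  constructor
  · rintro ⟨x, y, hxy, hadj⟩
    refine ⟨x 2, y 0, y 1, fun h => hxy 1 ?_, hadj 0 2 (by decide), hadj 1 2 (by decide)⟩
    exact h ▸ hadj 0 1 (by decide)
  · rintro ⟨b, a, c, hac, hba, hbc⟩
    obtain ⟨x, ⟨hax, hcx⟩ | ⟨hcx, hax⟩⟩ := hG.exists_adj_xor hac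
    · exact hasStaircase_three_of_adj hba hbc hax.symm (mt G.adj_symm hcx)
    · exact hasStaircase_three_of_adj hbc hba hcx.symm (mt G.adj_symm hax)

theorem SimpleGraph.Connected.two_le_card_edgeFinset_iff [Fintype G.edgeSet] (hG : G.Connected) :
    2 ≤ #G.edgeFinset ↔ ∃ b a c, a ≠ c ∧ G.Adj b a ∧ G.Adj b c := by
  constructor
  · intro h
    by_contra! hdeg
    obtain ⟨e, he, e', he', hne⟩ := Finset.one_lt_card.1 h
    induction e using Sym2.ind with | h x y => ?_
    have hxy : G.Adj x y := G.mem_edgeFinset.1 he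
    -- `{x, y}` is closed under adjacency, hence is all of `V`.
    have hall : ∀ v, v ∈ ({x, y} : Set V) := by
      intro v
      by_contra hv
      obtain ⟨d, -, hd, hd'⟩ := (hG.preconnected x v).some.exists_boundary_dart _ (by simp) hv
      rcases hd with hd | hd <;>
        simp only [Set.mem_insert_iff, Set.mem_singleton_iff, not_or] at hd hd'
      · exact hdeg x y d.snd (Ne.symm hd'.2) hxy (hd ▸ d.adj)
      · exact hdeg y x d.snd (Ne.symm hd'.1) hxy.symm (hd ▸ d.adj)
    induction e' using Sym2.ind with | h u v => ?_
    have huv : u ≠ v := (G.mem_edgeFinset.1 he').ne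
    apply hne
    rcases hall u with rfl | rfl <;> rcases hall v with rfl | rfl <;> simp_all [Sym2.eq_swap]
  · rintro ⟨b, a, c, hac, hba, hbc⟩
    refine Finset.one_lt_card.2
      ⟨s(b, a), G.mem_edgeFinset.2 hba, s(b, c), G.mem_edgeFinset.2 hbc, ?_⟩
    simp [hac, hbc.ne]

theorem hasStaircase_four_of_adj {v₁ v₂ v₃ v₄ w u : V}
    (h₁₂ : G.Adj v₁ v₂) (h₂₃ : G.Adj v₂ v₃) (h₃₄ : G.Adj v₃ v₄) (h₄₁ : G.Adj v₄ v₁)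
    (hw₁ : G.Adj v₁ w) (hw₃ : ¬ G.Adj v₃ w) (hu₄ : G.Adj v₄ u) (hu₂ : ¬ G.Adj v₂ u) :
    HasStaircase G 4 := by
  refine ⟨![v₁, w, v₂, v₄], ![v₁, v₃, u, v₄], fun r => ?_, fun s r hsr => ?_⟩
  · fin_cases r <;> simp [hu₂, mt G.adj_symm hw₃]
  · fin_cases s <;> fin_cases r <;> simp_all [Fin.lt_def, G.adj_comm]

theorem hasStaircase_four_iff (hG : Sober G) :
    HasStaircase G 4 ↔ ∃ v₁ v₂ v₃ v₄ : V,
      v₁ ≠ v₂ ∧ v₁ ≠ v₃ ∧ v₁ ≠ v₄ ∧ v₂ ≠ v₃ ∧ v₂ ≠ v₄ ∧ v₃ ≠ v₄ ∧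
      G.Adj v₁ v₂ ∧ G.Adj v₂ v₃ ∧ G.Adj v₃ v₄ ∧ G.Adj v₄ v₁ := by
  constructor
  · rintro ⟨x, y, hxy, hadj⟩
    have h02 := hadj 0 2 (by decide)
    have h12 := hadj 1 2 (by decide)
    have h03 := hadj 0 3 (by decide)
    have h13 := hadj 1 3 (by decide)
    refine ⟨y 0, x 2, y 1, x 3, h02.ne', fun h => hxy 1 (h ▸ hadj 0 1 (by decide)), h03.ne',
      h12.ne, fun h => hxy 2 (h ▸ hadj 2 3 (by decide)), h13.ne', h02.symm, h12, h13.symm, h03⟩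
  · rintro ⟨v₁, v₂, v₃, v₄, -, h₁₃, -, -, h₂₄, -, h₁₂, h₂₃, h₃₄, h₄₁⟩
    obtain ⟨w, ⟨hw₁, hw₃⟩ | ⟨hw₃, hw₁⟩⟩ := hG.exists_adj_xor h₁₃ <;>
      obtain ⟨u, ⟨hu₂, hu₄⟩ | ⟨hu₄, hu₂⟩⟩ := hG.exists_adj_xor h₂₄
    · exact hasStaircase_four_of_adj h₄₁.symm h₃₄.symm h₂₃.symm h₁₂.symm hw₁ hw₃ hu₂ hu₄
    · exact hasStaircase_four_of_adj h₁₂ h₂₃ h₃₄ h₄₁ hw₁ hw₃ hu₄ hu₂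
    · exact hasStaircase_four_of_adj h₃₄ h₄₁ h₁₂ h₂₃ hw₃ hw₁ hu₂ hu₄
    · exact hasStaircase_four_of_adj h₂₃.symm h₁₂.symm h₄₁.symm h₃₄.symm hw₃ hw₁ hu₄ hu₂

end Patterns

/-- For a finite sober connected simple graph `G`: `c-rk G = 3` iff `G` has at least 2
edges and contains no 4-cycle. -/
theorem crk_eq_three_iff {V : Type*} [Fintype V] (G : SimpleGraph V)
    [DecidableRel G.Adj] (hsober : Sober G) (hconn : G.Connected) :
    crk G = 3 ↔
      (2 ≤ G.edgeFinset.card ∧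
        ¬ ∃ v₁ v₂ v₃ v₄ : V,
          v₁ ≠ v₂ ∧ v₁ ≠ v₃ ∧ v₁ ≠ v₄ ∧ v₂ ≠ v₃ ∧ v₂ ≠ v₄ ∧ v₃ ≠ v₄ ∧
          G.Adj v₁ v₂ ∧ G.Adj v₂ v₃ ∧ G.Adj v₃ v₄ ∧ G.Adj v₄ v₁) := by
  rw [← hasStaircase_four_iff hsober, hconn.two_le_card_edgeFinset_iff,
    ← hasStaircase_three_iff hsober, ← le_crk_iff, ← le_crk_iff]
  omega
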